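/- Let f₁, f₂ ∈ ℝ² and let s be a real number with s > dist(f₁, f₂) and s > 0, and let E := {p ∈ ℝ² : dist(p, f₁) + dist(p, f₂) = s} be the corresponding ellipse. Suppose the origin (0,0) does not belong to E. Then there exists a unique quintuple (a, b, c, d, e) ∈ ℝ⁵ such that every point (x, y) ∈ E satisfies a·x² + b·y² + c·x·y + d·x + e·y + 1 = 0. -/

import Mathlib

/-!
After a rigid motion and a rescaling of the two principal axes, the ellipse with foci `f₁, f₂`
and string length `s` becomes the unit circle: it is `T ⁻¹' sphere 0 1` for an affine
automorphism `T` of the plane. Affine substitutions preserve quadratic polynomials, and a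
quadratic polynomial vanishing on the unit circle is a multiple of `1 - ‖x‖ ^ 2`, so the
quadratics vanishing on the ellipse are exactly the multiples of `1 - ‖T p‖ ^ 2`. The origin is
off the ellipse, so this function does not vanish at `0`: dividing by its value there gives the
normalized conic, and the only multiple whose constant term is `0` is `0` itself.
-/

open RealInnerProductSpace

local notation "ℝ²" => EuclideanSpace ℝ (Fin 2)

def IsQuadratic (q : ℝ² → ℝ) : Prop :=
  ∃ A B C D E F : ℝ, ∀ p, q p = A * p 0 ^ 2 + B * p 1 ^ 2 + C * p 0 * p 1 + D * p 0 + E * p 1 + F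

theorem AffineMap.exists_apply_coord_eq (T : ℝ² →ᵃ[ℝ] ℝ²) (i : Fin 2) :
    ∃ α β γ : ℝ, ∀ p, T p i = α * p 0 + β * p 1 + γ := by
  refine ⟨T.linear (EuclideanSpace.single 0 1) i, T.linear (EuclideanSpace.single 1 1) i, T 0 i,
    fun p => ?_⟩
  have hp : p = p 0 • EuclideanSpace.single 0 1 + p 1 • EuclideanSpace.single 1 1 := by
    ext j; fin_cases j <;> simp
  conv_lhs => rw [T.decomp, Pi.add_apply, hp]
  simp [mul_comm]

theorem IsQuadratic.comp_affineMap {q : ℝ² → ℝ} (hq : IsQuadratic q) (T : ℝ² →ᵃ[ℝ] ℝ²) :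
    IsQuadratic (q ∘ T) := by
  obtain ⟨A, B, C, D, E, F, hq⟩ := hq
  obtain ⟨α₀, β₀, γ₀, h₀⟩ := T.exists_apply_coord_eq 0
  obtain ⟨α₁, β₁, γ₁, h₁⟩ := T.exists_apply_coord_eq 1
  refine ⟨A * α₀ ^ 2 + B * α₁ ^ 2 + C * α₀ * α₁, A * β₀ ^ 2 + B * β₁ ^ 2 + C * β₀ * β₁,
    2 * A * α₀ * β₀ + 2 * B * α₁ * β₁ + C * (α₀ * β₁ + α₁ * β₀),
    2 * A * α₀ * γ₀ + 2 * B * α₁ * γ₁ + C * (α₀ * γ₁ + α₁ * γ₀) + D * α₀ + E * α₁,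
    2 * A * β₀ * γ₀ + 2 * B * β₁ * γ₁ + C * (β₀ * γ₁ + β₁ * γ₀) + D * β₀ + E * β₁,
    A * γ₀ ^ 2 + B * γ₁ ^ 2 + C * γ₀ * γ₁ + D * γ₀ + E * γ₁ + F, fun p => ?_⟩
  rw [Function.comp_apply, hq, h₀, h₁]
  ring

theorem IsQuadratic.sub {q r : ℝ² → ℝ} (hq : IsQuadratic q) (hr : IsQuadratic r) :
    IsQuadratic (q - r) := by
  obtain ⟨A, B, C, D, E, F, hq⟩ := hq
  obtain ⟨A', B', C', D', E', F', hr⟩ := hr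
  exact ⟨A - A', B - B', C - C', D - D', E - E', F - F', fun p => by
    rw [Pi.sub_apply, hq, hr]; ring⟩

theorem isQuadratic_one_sub_norm_sq : IsQuadratic fun p : ℝ² => 1 - ‖p‖ ^ 2 :=
  ⟨-1, -1, 0, 0, 0, 1, fun p => by
    simp only [EuclideanSpace.real_norm_sq_eq, Fin.sum_univ_two]; ring⟩

theorem one_sub_norm_sq_eq_zero_iff {E : Type*} [SeminormedAddCommGroup E] (x : E) :
    1 - ‖x‖ ^ 2 = 0 ↔ x ∈ Metric.sphere 0 1 := by
  rw [sub_eq_zero, eq_comm, pow_eq_one_iff_of_nonneg (norm_nonneg _) two_ne_zero,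
    mem_sphere_zero_iff_norm]

theorem IsQuadratic.eq_mul_one_sub_norm_sq {q : ℝ² → ℝ} (hq : IsQuadratic q)
    (hS : ∀ x ∈ Metric.sphere 0 1, q x = 0) (x : ℝ²) : q x = q 0 * (1 - ‖x‖ ^ 2) := by
  obtain ⟨A, B, C, D, E, F, hq⟩ := hq
  have h : ∀ a b : ℝ, a ^ 2 + b ^ 2 = 1 →
      A * a ^ 2 + B * b ^ 2 + C * a * b + D * a + E * b + F = 0 := fun a b hab => by
    simpa [hq] using
      hS !₂[a, b] (by simpa [EuclideanSpace.sphere_zero_eq, Fin.sum_univ_two] using hab)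
  have h₁ := h 1 0 (by norm_num)
  have h₂ := h (-1) 0 (by norm_num)
  have h₃ := h 0 1 (by norm_num)
  have h₄ := h 0 (-1) (by norm_num)
  have h₅ := h (3 / 5) (4 / 5) (by norm_num)
  have h₆ := h (3 / 5) (-4 / 5) (by norm_num)
  have hD : D = 0 := by linarith
  have hE : E = 0 := by linarith
  have hC : C = 0 := by linarith
  have hA : A = -F := by linarith
  have hB : B = -F := by linarith
  rw [hq, hq, EuclideanSpace.real_norm_sq_eq, Fin.sum_univ_two, hA, hB, hC, hD, hE]
  simp only [PiLp.zero_apply]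
  ring

theorem IsQuadratic.eq_zero_of_eqOn_preimage_sphere {q : ℝ² → ℝ} (hq : IsQuadratic q)
    (T : ℝ² ≃ᵃ[ℝ] ℝ²) (hS : ∀ p ∈ T ⁻¹' Metric.sphere 0 1, q p = 0) {p₀ : ℝ²}
    (hp₀ : p₀ ∉ T ⁻¹' Metric.sphere 0 1) (hq₀ : q p₀ = 0) : q = 0 := by
  have hqT := (hq.comp_affineMap T.symm.toAffineMap).eq_mul_one_sub_norm_sq
    fun x hx => hS _ (by simpa using hx)
  have hc : q (T.symm 0) = 0 := by
    simpa [hq₀, (one_sub_norm_sq_eq_zero_iff (T p₀)).not.2 hp₀] using hqT (T p₀)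
  funext p
  simpa [hc] using hqT (T p)

def normalizedConic (coef : ℝ × ℝ × ℝ × ℝ × ℝ) (p : ℝ²) : ℝ :=
  coef.1 * (p 0) ^ 2 + coef.2.1 * (p 1) ^ 2 + coef.2.2.1 * (p 0) * (p 1)
    + coef.2.2.2.1 * (p 0) + coef.2.2.2.2 * (p 1) + 1

theorem isQuadratic_normalizedConic (coef : ℝ × ℝ × ℝ × ℝ × ℝ) :
    IsQuadratic (normalizedConic coef) :=
  ⟨_, _, _, _, _, 1, fun _ => rfl⟩

theorem normalizedConic_injective : Function.Injective normalizedConic := by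
  rintro ⟨A, B, C, D, E⟩ ⟨A', B', C', D', E'⟩ h
  have h' : ∀ x y : ℝ, A * x ^ 2 + B * y ^ 2 + C * x * y + D * x + E * y
      = A' * x ^ 2 + B' * y ^ 2 + C' * x * y + D' * x + E' * y := fun x y => by
    simpa [normalizedConic] using congrFun h !₂[x, y]
  have h₁ := h' 1 0
  have h₂ := h' (-1) 0
  have h₃ := h' 0 1
  have h₄ := h' 0 (-1)
  have h₅ := h' 1 1
  simp only [Prod.mk.injEq]
  exact ⟨by linarith, by linarith, by linarith, by linarith, by linarith⟩

theorem IsQuadratic.exists_normalizedConic_eq {q : ℝ² → ℝ} (hq : IsQuadratic q) (h0 : q 0 ≠ 0) :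
    ∃ coef, ∀ p, normalizedConic coef p = q p / q 0 := by
  obtain ⟨A, B, C, D, E, F, hq⟩ := hq
  have hF : q 0 = F := by simpa using hq 0
  rw [hF] at h0 ⊢
  refine ⟨(A / F, B / F, C / F, D / F, E / F), fun p => ?_⟩
  rw [hq, normalizedConic]
  field_simp

theorem exists_norm_eq_one_and_eq_norm_smul {E : Type*} [NormedAddCommGroup E] [NormedSpace ℝ E]
    [Nontrivial E] (w : E) : ∃ u : E, ‖u‖ = 1 ∧ w = ‖w‖ • u := by
  rcases eq_or_ne w 0 with rfl | hw
  · obtain ⟨u, hu⟩ := exists_norm_eq E zero_le_one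
    exact ⟨u, hu, by simp⟩
  · exact ⟨‖w‖⁻¹ • w, norm_smul_inv_norm hw, by rw [smul_inv_smul₀ (norm_ne_zero_iff.2 hw)]⟩

theorem EuclideanSpace.exists_norm_eq_inner_eq_zero (u : ℝ²) : ∃ v : ℝ², ‖v‖ = ‖u‖ ∧ ⟪u, v⟫ = 0 := by
  refine ⟨!₂[-u 1, u 0], ?_, ?_⟩
  · simp [EuclideanSpace.norm_eq, Fin.sum_univ_two, add_comm]
  · simp [PiLp.inner_apply, Fin.sum_univ_two]; ring

theorem norm_smul_add_smul_sq {V : Type*} [NormedAddCommGroup V] [InnerProductSpace ℝ V]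
    {u v : V} (hu : ‖u‖ = 1) (hv : ‖v‖ = 1) (huv : ⟪u, v⟫ = 0) (a b : ℝ) :
    ‖a • u + b • v‖ ^ 2 = a ^ 2 + b ^ 2 := by
  rw [norm_add_sq_real, inner_smul_left, inner_smul_right, huv, norm_smul, norm_smul, hu, hv]
  simp

theorem exists_affineEquiv_apply_eq (m e₀ e₁ : ℝ²) (h₀ : e₀ ≠ 0) (h₁ : e₁ ≠ 0) (h : ⟪e₀, e₁⟫ = 0) :
    ∃ T : ℝ² ≃ᵃ[ℝ] ℝ², ∀ x, T x = m + x 0 • e₀ + x 1 • e₁ := by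
  let L : ℝ² →ₗ[ℝ] ℝ² := (EuclideanSpace.proj (𝕜 := ℝ) 0).toLinearMap.smulRight e₀ +
    (EuclideanSpace.proj (𝕜 := ℝ) 1).toLinearMap.smulRight e₁
  have hL : Function.Injective L := by
    rw [← LinearMap.ker_eq_bot, LinearMap.ker_eq_bot']
    intro x hx
    have hx₀ : x 0 = 0 := by
      simpa [L, inner_add_right, inner_smul_right, h, h₀] using congrArg (inner ℝ e₀) hx
    have hx₁ : x 1 = 0 := by
      simpa [L, inner_add_right, inner_smul_right, real_inner_comm e₀ e₁, h, h₁] using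
        congrArg (inner ℝ e₁) hx
    ext i; fin_cases i <;> simp [hx₀, hx₁]
  refine ⟨(LinearEquiv.ofInjectiveEndo L hL).toAffineEquiv.trans (AffineEquiv.constVAdd ℝ _ m),
    fun x => ?_⟩
  simp [L, add_assoc]

theorem exists_affineEquiv_dist_sq_eq (f₁ f₂ : ℝ²) {a b : ℝ} (ha : a ≠ 0) (hb : b ≠ 0) :
    ∃ T : ℝ² ≃ᵃ[ℝ] ℝ², ∀ x,
      dist (T x) f₁ ^ 2 = (a * x 0 + dist f₁ f₂ / 2) ^ 2 + (b * x 1) ^ 2 ∧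
      dist (T x) f₂ ^ 2 = (a * x 0 - dist f₁ f₂ / 2) ^ 2 + (b * x 1) ^ 2 := by
  obtain ⟨u, hu, hfu⟩ := exists_norm_eq_one_and_eq_norm_smul (f₂ - f₁)
  obtain ⟨v, hv, huv⟩ := EuclideanSpace.exists_norm_eq_inner_eq_zero u
  rw [hu] at hv
  obtain ⟨T, hT⟩ := exists_affineEquiv_apply_eq (midpoint ℝ f₁ f₂) (a • u) (b • v)
    (smul_ne_zero ha (norm_ne_zero_iff.1 (by simp [hu])))
    (smul_ne_zero hb (norm_ne_zero_iff.1 (by simp [hv])))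
    (by rw [inner_smul_left, inner_smul_right, huv]; simp)
  have hm₁ : midpoint ℝ f₁ f₂ - f₁ = (dist f₁ f₂ / 2) • u := by
    rw [midpoint_sub_left, hfu, smul_smul, ← dist_eq_norm, dist_comm, invOf_eq_inv, inv_mul_eq_div]
  have hm₂ : midpoint ℝ f₁ f₂ - f₂ = (-(dist f₁ f₂ / 2)) • u := by
    rw [midpoint_sub_right, ← neg_sub, hfu, smul_neg, smul_smul, ← dist_eq_norm, dist_comm,
      invOf_eq_inv, inv_mul_eq_div, neg_smul]
  refine ⟨T, fun x => ⟨?_, ?_⟩⟩ <;>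
    rw [dist_eq_norm, ← norm_smul_add_smul_sq hu hv huv, hT] <;> congr 2
  · linear_combination (norm := module) hm₁
  · linear_combination (norm := module) hm₂

-- The product of the four sign choices in `r₁ ± r₂ = ± 2a` is a polynomial in `r₁²` and `r₂²`,
-- namely `16 a² b² (1 - x² - y²)`; the three factors other than `r₁ + r₂ - 2a` cannot vanish.
theorem add_eq_two_mul_iff_sq_add_sq_eq_one {r₁ r₂ a b c x y : ℝ}
    (h₁ : r₁ ^ 2 = (a * x + c) ^ 2 + (b * y) ^ 2) (h₂ : r₂ ^ 2 = (a * x - c) ^ 2 + (b * y) ^ 2)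
    (hb : b ^ 2 = a ^ 2 - c ^ 2) (hb₀ : b ≠ 0) (hr₁ : 0 ≤ r₁) (hr₂ : 0 ≤ r₂)
    (hr : |r₁ - r₂| < 2 * a) :
    r₁ + r₂ = 2 * a ↔ x ^ 2 + y ^ 2 = 1 := by
  have ha : 0 < a := by linarith [abs_nonneg (r₁ - r₂)]
  obtain ⟨hlo, hhi⟩ := abs_lt.mp hr
  have hK : (r₁ + r₂ + 2 * a) * ((r₁ - r₂ - 2 * a) * (r₁ - r₂ + 2 * a)) ≠ 0 :=
    mul_ne_zero (by linarith) (mul_ne_zero (by linarith) (by linarith))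
  have key : (r₁ + r₂ - 2 * a) * ((r₁ + r₂ + 2 * a) * ((r₁ - r₂ - 2 * a) * (r₁ - r₂ + 2 * a)))
      = 16 * a ^ 2 * b ^ 2 * (1 - x ^ 2 - y ^ 2) := by
    linear_combination (r₁ ^ 2 - r₂ ^ 2 + 4 * a * c * x - 8 * a ^ 2) * h₁
      + (-(r₁ ^ 2 - r₂ ^ 2 + 4 * a * c * x) - 8 * a ^ 2) * h₂ + 16 * a ^ 2 * (x ^ 2 - 1) * hb
  rw [← sub_eq_zero, ← mul_eq_zero_iff_right hK, key, mul_eq_zero, or_iff_right (by positivity),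
    sub_sub, sub_eq_zero, eq_comm]

theorem exists_affineEquiv_ellipse_eq_preimage_sphere {f₁ f₂ : ℝ²} {s : ℝ} (hs : dist f₁ f₂ < s) :
    ∃ T : ℝ² ≃ᵃ[ℝ] ℝ², {p | dist p f₁ + dist p f₂ = s} = T ⁻¹' Metric.sphere 0 1 := by
  obtain ⟨a, rfl⟩ : ∃ a, s = 2 * a := ⟨s / 2, by ring⟩
  set c := dist f₁ f₂ / 2 with hc
  have hca : c < a := by linarith
  have hc₀ : 0 ≤ c := by positivity
  obtain ⟨b, hb, hb₀⟩ : ∃ b, b ^ 2 = a ^ 2 - c ^ 2 ∧ 0 < b :=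
    ⟨√(a ^ 2 - c ^ 2), Real.sq_sqrt (by nlinarith), Real.sqrt_pos.2 (by nlinarith)⟩
  obtain ⟨T, hT⟩ := exists_affineEquiv_dist_sq_eq f₁ f₂ (hc₀.trans_lt hca).ne' hb₀.ne'
  refine ⟨T.symm, Set.ext fun p => ?_⟩
  obtain ⟨x, rfl⟩ := T.surjective p
  have hr : |dist (T x) f₁ - dist (T x) f₂| < 2 * a := by
    rw [dist_comm _ f₁, dist_comm _ f₂]
    exact (abs_dist_sub_le f₁ f₂ (T x)).trans_lt hs
  rw [Set.mem_preimage, T.symm_apply_apply, Set.mem_ofPred_eq,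
    add_eq_two_mul_iff_sq_add_sq_eq_one (hT x).1 (hT x).2 hb hb₀.ne' dist_nonneg dist_nonneg hr,
    EuclideanSpace.sphere_zero_eq 1 zero_le_one]
  simp [Fin.sum_univ_two]

theorem existsUnique_normalized_conic_general (f₁ f₂ : EuclideanSpace ℝ (Fin 2)) (s : ℝ)
    (hs : s > dist f₁ f₂)
    (h0 : (0 : EuclideanSpace ℝ (Fin 2)) ∉
      {p : EuclideanSpace ℝ (Fin 2) | dist p f₁ + dist p f₂ = s}) :
    ∃! coef : ℝ × ℝ × ℝ × ℝ × ℝ,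
      ∀ p ∈ {p : EuclideanSpace ℝ (Fin 2) | dist p f₁ + dist p f₂ = s},
        coef.1 * (p 0) ^ 2 + coef.2.1 * (p 1) ^ 2 + coef.2.2.1 * (p 0) * (p 1)
          + coef.2.2.2.1 * (p 0) + coef.2.2.2.2 * (p 1) + 1 = 0 := by
  obtain ⟨T, hT⟩ := exists_affineEquiv_ellipse_eq_preimage_sphere hs
  rw [hT] at h0 ⊢
  have hg : IsQuadratic fun p => 1 - ‖T p‖ ^ 2 :=
    isQuadratic_one_sub_norm_sq.comp_affineMap T.toAffineMap
  obtain ⟨coef, hcoef⟩ := hg.exists_normalizedConic_eq ((one_sub_norm_sq_eq_zero_iff _).not.2 h0)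
  have hvan : ∀ p ∈ T ⁻¹' Metric.sphere 0 1, normalizedConic coef p = 0 := fun p hp => by
    rw [hcoef, (one_sub_norm_sq_eq_zero_iff _).2 hp, zero_div]
  refine ⟨coef, hvan, fun coef' hcoef' => normalizedConic_injective (sub_eq_zero.1 ?_)⟩
  refine ((isQuadratic_normalizedConic coef').sub (isQuadratic_normalizedConic coef))
    |>.eq_zero_of_eqOn_preimage_sphere T (fun p hp => ?_) h0 (by simp [normalizedConic])
  rw [Pi.sub_apply, hvan p hp, sub_zero]
  exact hcoef' p hp

/-- If the origin does not lie on an ellipse, there is a unique normalized conic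
(with constant term 1) vanishing on the ellipse. -/
theorem existsUnique_normalized_conic (f₁ f₂ : EuclideanSpace ℝ (Fin 2)) (s : ℝ)
    (hs : s > dist f₁ f₂) (hs0 : s > 0)
    (h0 : (0 : EuclideanSpace ℝ (Fin 2)) ∉
      {p : EuclideanSpace ℝ (Fin 2) | dist p f₁ + dist p f₂ = s}) :
    ∃! coef : ℝ × ℝ × ℝ × ℝ × ℝ,
      ∀ p ∈ {p : EuclideanSpace ℝ (Fin 2) | dist p f₁ + dist p f₂ = s},
        coef.1 * (p 0) ^ 2 + coef.2.1 * (p 1) ^ 2 + coef.2.2.1 * (p 0) * (p 1)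
          + coef.2.2.2.1 * (p 0) + coef.2.2.2.2 * (p 1) + 1 = 0 :=
  existsUnique_normalized_conic_general f₁ f₂ s hs h0
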